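/- arXiv:1710.03982 — 2 statements merged into one kernel-verified Lean document; each statement's English description precedes it below -/
import Mathlib

section
/- Let α, β, γ ∈ ℂ with γ not equal to any nonpositive integer. Then the hypergeometric series ∑_{n=0}^∞ (α)_n(β)_n/((γ)__n · n!) · x^n converges for every complex x with |x| < 1, and the resulting function F is twice complex-differentiable on the open unit disc and satisfies Euler's hypergeometric differential equation x(1−x)·F''(x) + (γ − (α+β+1)x)·F'(x) − αβ·F(x) = 0 for all |x| < 1. -/
/-!
The series is Mathlib's `ordinaryHypergeometricSeries`, whose radius of convergence is at least 1
when `γ ∉ -ℕ` (it is `⊤` when `α` or `β` is a nonpositive integer). So `F` is analytic on the unit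
disc and `F'`, `F''` are the termwise derived power series. Multiplying a derived series by `x`
only shifts indices, so the coefficient of `xⁿ` in the differential equation is
`(n + 1)(n + γ) cₙ₊₁ - (n + α)(n + β) cₙ`, which vanishes by the ratio recurrence of the
coefficients `cₙ`.
-/

/-- The hypergeometric series `F(α, β; γ; x) = ∑ (α)ₙ(β)ₙ/((γ)ₙ n!) xⁿ`. -/
noncomputable def hypergeomF (α β γ : ℂ) (x : ℂ) : ℂ :=
  ∑' n : ℕ,
    (ascPochhammer ℂ n).eval α * (ascPochhammer ℂ n).eval β /
      ((ascPochhammer ℂ n).eval γ * (Nat.factorial n : ℂ)) * x ^ n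

open FormalMultilinearSeries

section PowerSeries

variable {𝕜 : Type*} [NontriviallyNormedField 𝕜]

def derivCoeff (c : ℕ → 𝕜) (n : ℕ) : 𝕜 := (n + 1) * c (n + 1)

theorem HasFPowerSeriesOnBall.deriv_ofScalars [CompleteSpace 𝕜] {f : 𝕜 → 𝕜} {c : ℕ → 𝕜}
    {r : ENNReal} (h : HasFPowerSeriesOnBall f (ofScalars 𝕜 c) 0 r) :
    HasFPowerSeriesOnBall (deriv f) (ofScalars 𝕜 (derivCoeff c)) 0 r := by
  have hseries : (ContinuousLinearMap.apply 𝕜 𝕜 (1 : 𝕜)).compFormalMultilinearSeries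
      (ofScalars 𝕜 c).derivSeries = ofScalars 𝕜 (derivCoeff c) := by
    ext n
    simp [derivCoeff]
  exact hseries ▸ (ContinuousLinearMap.apply 𝕜 𝕜 (1 : 𝕜)).comp_hasFPowerSeriesOnBall h.fderiv

theorem HasFPowerSeriesOnBall.hasSum_ofScalars {f : 𝕜 → 𝕜} {c : ℕ → 𝕜} {r : ENNReal}
    (h : HasFPowerSeriesOnBall f (ofScalars 𝕜 c) 0 r) {y : 𝕜} (hy : y ∈ Metric.eball 0 r) :
    HasSum (fun n => c n * y ^ n) (f y) := by
  simpa [ofScalars_apply_eq, mul_comm] using h.hasSum hy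

theorem HasSum.mul_left_of_derivCoeff {c : ℕ → 𝕜} {x s : 𝕜}
    (h : HasSum (fun n => derivCoeff c n * x ^ n) s) :
    HasSum (fun n => n * c n * x ^ n) (x * s) := by
  rw [← hasSum_nat_add_iff' 1]
  simpa [derivCoeff, pow_succ, mul_comm, mul_left_comm, mul_assoc] using h.mul_left x

theorem hypergeometric_ode_of_hasSum {a b c : 𝕜} {u : ℕ → 𝕜} {x F F' F'' : 𝕜}
    (hu : ∀ n : ℕ, (n + 1) * (n + c) * u (n + 1) = (n + a) * (n + b) * u n)
    (hF : HasSum (fun n => u n * x ^ n) F)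
    (hF' : HasSum (fun n => derivCoeff u n * x ^ n) F')
    (hF'' : HasSum (fun n => derivCoeff (derivCoeff u) n * x ^ n) F'') :
    x * (1 - x) * F'' + (c - (a + b + 1) * x) * F' - a * b * F = 0 := by
  have hxF'' : HasSum (fun n => n * derivCoeff u n * x ^ n) (x * F'') :=
    hF''.mul_left_of_derivCoeff
  -- `x F'' + (a + b + 1) F'` is the termwise derivative of `∑ (n + a + b) uₙ xⁿ`
  have hxG : HasSum (fun n => n * ((n + a + b) * u n) * x ^ n)
      (x * (x * F'' + (a + b + 1) * F')) := by
    refine HasSum.mul_left_of_derivCoeff ?_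
    convert hxF''.add (hF'.mul_left (a + b + 1)) using 1
    ext n
    simp only [derivCoeff, Nat.cast_add, Nat.cast_one]
    ring
  have hsum := ((hxF''.add (hF'.mul_left c)).sub hxG).sub (hF.mul_left (a * b))
  have hterms : ∀ n : ℕ, n * derivCoeff u n * x ^ n + c * (derivCoeff u n * x ^ n) -
      n * ((n + a + b) * u n) * x ^ n - a * b * (u n * x ^ n) = 0 := fun n => by
    simp only [derivCoeff]
    linear_combination x ^ n * hu n
  simp only [hterms] at hsum
  linear_combination hsum.unique hasSum_zero

end PowerSeries

section Hypergeometric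

theorem ordinaryHypergeometricCoefficient_succ {𝕂 : Type*} [Field 𝕂] [CharZero 𝕂]
    {a b c : 𝕂} (n : ℕ) (hc : c ≠ -n) :
    (n + 1) * (n + c) * ordinaryHypergeometricCoefficient a b c (n + 1) =
      (n + a) * (n + b) * ordinaryHypergeometricCoefficient a b c n := by
  have hn : (n + 1 : 𝕂) ≠ 0 := n.cast_add_one_ne_zero
  have hcn : c + n ≠ 0 := fun h => hc (eq_neg_of_add_eq_zero_left h)
  simp only [ordinaryHypergeometricCoefficient, ascPochhammer_succ_eval, Nat.factorial_succ,
    Nat.cast_mul, Nat.cast_succ, mul_inv]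
  field_simp
  ring

theorem one_le_radius_ordinaryHypergeometricSeries {𝕂 : Type*} [RCLike 𝕂] (𝔸 : Type*)
    [NormedDivisionRing 𝔸] [NormedAlgebra 𝕂 𝔸] (a b : 𝕂) {c : 𝕂} (hc : ∀ n : ℕ, c ≠ -n) :
    1 ≤ (ordinaryHypergeometricSeries 𝔸 a b c).radius := by
  by_cases ha : ∃ k : ℕ, a = -k
  · obtain ⟨k, rfl⟩ := ha
    simp [ordinaryHypergeometric_radius_top_of_neg_nat₁]
  by_cases hb : ∃ k : ℕ, b = -k
  · obtain ⟨k, rfl⟩ := hb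
    simp [ordinaryHypergeometric_radius_top_of_neg_nat₂]
  push Not at ha hb
  refine (ordinaryHypergeometricSeries_radius_eq_one 𝔸 a b c fun k => ?_).ge
  refine ⟨fun h => ha k ?_, fun h => hb k ?_, fun h => hc k ?_⟩ <;> linear_combination h

theorem ordinaryHypergeometricCoefficient_eq_div {𝕂 : Type*} [Field 𝕂] (a b c : 𝕂) (n : ℕ) :
    ordinaryHypergeometricCoefficient a b c n =
      (ascPochhammer 𝕂 n).eval a * (ascPochhammer 𝕂 n).eval b /
        ((ascPochhammer 𝕂 n).eval c * (n.factorial : 𝕂)) := by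
  rw [ordinaryHypergeometricCoefficient, div_eq_mul_inv, mul_inv]
  ring

theorem hypergeomF_eq_ordinaryHypergeometric (α β γ : ℂ) :
    hypergeomF α β γ = ordinaryHypergeometric α β γ := by
  ext x
  simp [ordinaryHypergeometric_eq_tsum, hypergeomF, ordinaryHypergeometricCoefficient_eq_div]

theorem hasFPowerSeriesOnBall_hypergeomF (α β : ℂ) {γ : ℂ} (hγ : ∀ n : ℕ, γ ≠ -n) :
    HasFPowerSeriesOnBall (hypergeomF α β γ)
      (ofScalars ℂ (ordinaryHypergeometricCoefficient α β γ)) 0 1 := by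
  have h := one_le_radius_ordinaryHypergeometricSeries ℂ α β hγ
  rw [hypergeomF_eq_ordinaryHypergeometric]
  exact ((ordinaryHypergeometricSeries ℂ α β γ).hasFPowerSeriesOnBall
    (zero_lt_one.trans_le h)).mono one_pos h

end Hypergeometric

/-- If `γ` is not a nonpositive integer, then the hypergeometric series converges on the
open unit disc, and the resulting function is twice complex-differentiable there and
satisfies Euler's hypergeometric differential equation
`x(1-x) F'' + (γ - (α+β+1)x) F' - αβ F = 0`. -/
theorem hypergeometric_ode (α β γ : ℂ) (hγ : ∀ n : ℕ, γ ≠ -(n : ℂ)) :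
    (∀ x : ℂ, ‖x‖ < 1 →
      Summable (fun n : ℕ =>
        (ascPochhammer ℂ n).eval α * (ascPochhammer ℂ n).eval β /
          ((ascPochhammer ℂ n).eval γ * (Nat.factorial n : ℂ)) * x ^ n)) ∧
    (∀ x : ℂ, ‖x‖ < 1 →
      DifferentiableAt ℂ (hypergeomF α β γ) x ∧
        DifferentiableAt ℂ (deriv (hypergeomF α β γ)) x) ∧
    (∀ x : ℂ, ‖x‖ < 1 →
      x * (1 - x) * deriv (deriv (hypergeomF α β γ)) x +
          (γ - (α + β + 1) * x) * deriv (hypergeomF α β γ) x -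
          α * β * hypergeomF α β γ x = 0) := by
  have hF := hasFPowerSeriesOnBall_hypergeomF α β hγ
  have hF' := hF.deriv_ofScalars
  have hF'' := hF'.deriv_ofScalars
  have hball : ∀ x : ℂ, ‖x‖ < 1 → x ∈ Metric.eball (0 : ℂ) 1 := fun x hx => by
    rwa [← ENNReal.coe_one, Metric.eball_coe, NNReal.coe_one, mem_ball_zero_iff]
  refine ⟨fun x hx => ?_, fun x hx => ⟨?_, ?_⟩, fun x hx => ?_⟩
  · exact (hF.hasSum_ofScalars (hball x hx)).summable.congr fun n => by
      rw [ordinaryHypergeometricCoefficient_eq_div]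
  · exact (hF.analyticAt_of_mem (hball x hx)).differentiableAt
  · exact (hF'.analyticAt_of_mem (hball x hx)).differentiableAt
  · exact hypergeometric_ode_of_hasSum
      (fun n => ordinaryHypergeometricCoefficient_succ n (hγ n))
      (hF.hasSum_ofScalars (hball x hx)) (hF'.hasSum_ofScalars (hball x hx))
      (hF''.hasSum_ofScalars (hball x hx))
end

section
/- d'Alembert's representation of solutions of the wave equation: let α be a nonzero real number and let u : ℝ × ℝ → ℝ be twice continuously differentiable (ContDiff ℝ 2 on ℝ × ℝ) and satisfy, for all x, t ∈ ℝ, ∂²u/∂t²(x,t) = α² · ∂²u/∂x²(x,t), where ∂²u/∂t²(x,t) = deriv (deriv (s ↦ u(x,s))) t and ∂²u/∂x²(x,t) = deriv (deriv (y ↦ u(y,t))) x. Then there exist functions φ, ψ : ℝ → ℝ such that u(x,t) = φ(x + α·t) + ψ(x − α·t) for all x, t ∈ ℝ. -/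
/-!
In the characteristic coordinates `ξ = x + αt`, `η = x - αt` the wave operator becomes a
multiple of the mixed derivative `∂²/∂ξ∂η`. So the second derivative of `u` in the
characteristic directions `(α, 1)` and `(α, -1)` vanishes, and integrating once along each
direction splits `u` into a function of `ξ` plus a function of `η`.
-/

section LineRestriction

variable {E F : Type*} [NormedAddCommGroup E] [NormedSpace ℝ E]
  [NormedAddCommGroup F] [NormedSpace ℝ F] {g : E → F}

theorem HasFDerivAt.hasDerivAt_comp_add_smul {g' : E →L[ℝ] F} {p v : E} {t : ℝ}
    (h : HasFDerivAt g g' (p + t • v)) :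
    HasDerivAt (fun s : ℝ => g (p + s • v)) (g' v) t := by
  have hline : HasDerivAt (fun s : ℝ => p + s • v) v t := by
    simpa using ((hasDerivAt_id t).smul_const v).const_add p
  exact h.comp_hasDerivAt t hline

theorem deriv_comp_add_smul (hg : Differentiable ℝ g) (p v : E) :
    deriv (fun s : ℝ => g (p + s • v)) = fun s => fderiv ℝ g (p + s • v) v :=
  funext fun _ => (hg _).hasFDerivAt.hasDerivAt_comp_add_smul.deriv

theorem deriv_deriv_comp_add_smul (hg : Differentiable ℝ g)
    (hg' : Differentiable ℝ (fderiv ℝ g)) (p v : E) (t : ℝ) :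
    deriv (deriv fun s : ℝ => g (p + s • v)) t = fderiv ℝ (fderiv ℝ g) (p + t • v) v v := by
  rw [deriv_comp_add_smul hg]
  have h := (hg' _).hasFDerivAt.hasDerivAt_comp_add_smul (p := p) (v := v) (t := t)
  exact (h.clm_apply (hasDerivAt_const t v)).deriv.trans (by simp)

theorem fderiv_apply_add_smul_eq_of_fderiv_fderiv_eq_zero
    (hg' : Differentiable ℝ (fderiv ℝ g)) {v w : E}
    (hvw : ∀ q, fderiv ℝ (fderiv ℝ g) q w v = 0) (p : E) (t : ℝ) :
    fderiv ℝ g (p + t • w) v = fderiv ℝ g p v := by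
  have hconst : ∀ s : ℝ, HasDerivAt (fun s : ℝ => fderiv ℝ g (p + s • w) v) 0 s := fun s => by
    simpa [hvw] using ((hg' (p + s • w)).hasFDerivAt.hasDerivAt_comp_add_smul.clm_apply
      (hasDerivAt_const s v))
  simpa using is_const_of_deriv_eq_zero (fun s => (hconst s).differentiableAt)
    (fun s => (hconst s).deriv) t 0

theorem add_smul_add_smul_eq_of_fderiv_fderiv_eq_zero (hg : Differentiable ℝ g)
    (hg' : Differentiable ℝ (fderiv ℝ g)) {v w : E}
    (hvw : ∀ q, fderiv ℝ (fderiv ℝ g) q w v = 0) (p : E) (s t : ℝ) :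
    g (p + s • v + t • w) = g (p + s • v) + g (p + t • w) - g p := by
  have hconst : ∀ r : ℝ,
      HasDerivAt (fun r : ℝ => g (p + t • w + r • v) - g (p + r • v)) 0 r := fun r => by
    have hd := (hg (p + t • w + r • v)).hasFDerivAt.hasDerivAt_comp_add_smul.sub
      (hg (p + r • v)).hasFDerivAt.hasDerivAt_comp_add_smul
    rwa [add_right_comm, fderiv_apply_add_smul_eq_of_fderiv_fderiv_eq_zero hg' hvw,
      sub_self] at hd
  have h := is_const_of_deriv_eq_zero (fun r => (hconst r).differentiableAt)
    (fun r => (hconst r).deriv) s 0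
  simp only [zero_smul, add_zero] at h
  rw [sub_eq_iff_eq_add] at h
  rw [add_right_comm, h]
  abel

end LineRestriction

theorem ContinuousLinearMap.apply_characteristic_eq_zero
    (B : ℝ × ℝ →L[ℝ] ℝ × ℝ →L[ℝ] ℝ) (hB : ∀ v w, B v w = B w v) (α : ℝ)
    (hwave : B (0, 1) (0, 1) = α ^ 2 * B (1, 0) (1, 0)) :
    B (α, -1) (α, 1) = 0 := by
  have hplus : ((α, 1) : ℝ × ℝ) = α • (1, 0) + (0, 1) := by ext <;> simp
  have hminus : ((α, -1) : ℝ × ℝ) = α • (1, 0) - (0, 1) := by ext <;> simp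
  rw [hplus, hminus]
  simp only [map_add, map_sub, map_smul, sub_apply,
    smul_apply, smul_eq_mul]
  rw [hB (0, 1) (1, 0), hwave]
  ring

theorem fderiv_fderiv_of_wave_equation {u : ℝ × ℝ → ℝ} (hu : Differentiable ℝ u)
    (hu' : Differentiable ℝ (fderiv ℝ u)) {α : ℝ}
    (hwave : ∀ x t : ℝ, deriv (deriv (fun s : ℝ => u (x, s))) t =
      α ^ 2 * deriv (deriv (fun y : ℝ => u (y, t))) x) (p : ℝ × ℝ) :
    fderiv ℝ (fderiv ℝ u) p (0, 1) (0, 1) = α ^ 2 * fderiv ℝ (fderiv ℝ u) p (1, 0) (1, 0) := by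
  obtain ⟨x, t⟩ := p
  have htime : (fun s : ℝ => u (x, s)) = fun s => u ((x, 0) + s • (0, 1)) := by
    funext s; simp
  have hspace : (fun y : ℝ => u (y, t)) = fun y => u ((0, t) + y • (1, 0)) := by
    funext y; simp
  have h := hwave x t
  rw [htime, hspace, deriv_deriv_comp_add_smul hu hu', deriv_deriv_comp_add_smul hu hu'] at h
  simpa using h

/-- d'Alembert's representation of solutions of the wave equation: if `α ≠ 0` and
`u : ℝ × ℝ → ℝ` is `C²` and satisfies `∂²u/∂t² = α² ∂²u/∂x²` everywhere, then there
are `φ, ψ : ℝ → ℝ` with `u(x,t) = φ(x + αt) + ψ(x - αt)` for all `x, t`. -/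
theorem dalembert_wave_equation (α : ℝ) (hα : α ≠ 0) (u : ℝ × ℝ → ℝ)
    (hu : ContDiff ℝ 2 u)
    (hwave : ∀ x t : ℝ,
      deriv (deriv (fun s : ℝ => u (x, s))) t =
        α ^ 2 * deriv (deriv (fun y : ℝ => u (y, t))) x) :
    ∃ φ ψ : ℝ → ℝ, ∀ x t : ℝ, u (x, t) = φ (x + α * t) + ψ (x - α * t) := by
  have hu1 : Differentiable ℝ u := hu.differentiable (by norm_num)
  have hu2 : Differentiable ℝ (fderiv ℝ u) := (hu.fderiv_right (m := 1) le_rfl).differentiable one_ne_zero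
  have hmixed : ∀ p, fderiv ℝ (fderiv ℝ u) p (α, -1) (α, 1) = 0 := fun p =>
    ContinuousLinearMap.apply_characteristic_eq_zero _
      (hu.contDiffAt.isSymmSndFDerivAt (by simp)) α
      (fderiv_fderiv_of_wave_equation hu1 hu2 hwave p)
  refine ⟨fun ξ => u ((ξ / (2 * α)) • (α, 1)),
    fun η => u ((η / (2 * α)) • (α, -1)) - u 0, fun x t => ?_⟩
  have hcoord : ((x, t) : ℝ × ℝ) =
      0 + ((x + α * t) / (2 * α)) • (α, 1) + ((x - α * t) / (2 * α)) • (α, -1) := by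
    ext <;> simp <;> field_simp <;> ring
  rw [hcoord, add_smul_add_smul_eq_of_fderiv_fderiv_eq_zero hu1 hu2 hmixed]
  simp only [zero_add]
  ring
end
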